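/- arXiv:2305.03824 — 5 statements merged into one kernel-verified Lean document; each statement's English description precedes it below -/
import Mathlib

section
/- Let X be a nonempty finite set, n ∈ ℕ, and let f_i, l_i, u_i : X → ℝ for i ∈ {0,1,…,n} satisfy l_i(x) ≤ f_i(x) ≤ u_i(x) for all i and all x ∈ X. Suppose there exists x* ∈ X with f_i(x*) ≥ 0 for all i ∈ {1,…,n} and f_0(x*) ≥ f_0(x) for every x ∈ X with f_i(x) ≥ 0 for all i ∈ {1,…,n}. Then: (i) the set S = { x ∈ X : u_i(x) ≥ 0 for all i ∈ {1,…,n} } is nonempty; and (ii) for any x' ∈ S with u_0(x') ≥ u_0(x) for all x ∈ S, one has [f_0(x*) − f_0(x')]⁺ ≤ u_0(x') − l_0(x') and [−f_i(x')]⁺ ≤ u_i(x') − l_i(x') for every i ∈ {1,…,n}. -/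
/-! Optimism: the upper bounds keep `x*` in the relaxed feasible set, so
`f₀ x* ≤ u₀ x* ≤ u₀ x'`, while `l₀ x' ≤ f₀ x'`; constraint violations are handled the same way
with `0 ≤ u_i x'` in place of `f₀ x* ≤ u₀ x'`. -/

theorem max_sub_zero_le_sub_of_le {α : Type*} [AddCommGroup α] [LinearOrder α]
    [IsOrderedAddMonoid α] {a l f u : α} (hlf : l ≤ f) (hfu : f ≤ u) (hau : a ≤ u) :
    max (a - f) 0 ≤ u - l :=
  max_le (sub_le_sub hau hlf) (sub_nonneg.2 (hlf.trans hfu))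

theorem lemma2_deterministic_core_general {X : Type*} (n : ℕ)
    (f₀ l₀ u₀ : X → ℝ) (f l u : Fin n → X → ℝ)
    (hbr₀ : ∀ x, l₀ x ≤ f₀ x ∧ f₀ x ≤ u₀ x)
    (hbr : ∀ i x, l i x ≤ f i x ∧ f i x ≤ u i x)
    (xstar : X) (hfeas : ∀ i, 0 ≤ f i xstar) :
    (∃ x, ∀ i, 0 ≤ u i x) ∧
      ∀ x' : X, (∀ i, 0 ≤ u i x') → (∀ x, (∀ i, 0 ≤ u i x) → u₀ x ≤ u₀ x') →
        max (f₀ xstar - f₀ x') 0 ≤ u₀ x' - l₀ x' ∧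
          ∀ i, max (-(f i x')) 0 ≤ u i x' - l i x' := by
  have hstar : ∀ i, 0 ≤ u i xstar := fun i => (hfeas i).trans (hbr i xstar).2
  refine ⟨⟨xstar, hstar⟩, fun x' hx' hmax => ⟨?_, fun i => ?_⟩⟩
  · exact max_sub_zero_le_sub_of_le (hbr₀ x').1 (hbr₀ x').2
      ((hbr₀ xstar).2.trans (hmax xstar hstar))
  · simpa using max_sub_zero_le_sub_of_le (hbr i x').1 (hbr i x').2 (hx' i)

/-- Deterministic core of Lemma 2 of the paper: given brackets `l_i ≤ f_i ≤ u_i`,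
a feasible maximizer `x*`, the relaxed feasible set `{x : u_i(x) ≥ 0 ∀i}` is nonempty,
and any maximizer `x'` of `u_0` over it has positive regret and constraint violations
bounded by the corresponding bound widths. -/
theorem lemma2_deterministic_core {X : Type*} [Fintype X] [Nonempty X] (n : ℕ)
    (f₀ l₀ u₀ : X → ℝ) (f l u : Fin n → X → ℝ)
    (hbr₀ : ∀ x, l₀ x ≤ f₀ x ∧ f₀ x ≤ u₀ x)
    (hbr : ∀ i x, l i x ≤ f i x ∧ f i x ≤ u i x)
    (xstar : X) (hfeas : ∀ i, 0 ≤ f i xstar)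
    (hopt : ∀ x, (∀ i, 0 ≤ f i x) → f₀ x ≤ f₀ xstar) :
    (∃ x, ∀ i, 0 ≤ u i x) ∧
      ∀ x' : X, (∀ i, 0 ≤ u i x') → (∀ x, (∀ i, 0 ≤ u i x) → u₀ x ≤ u₀ x') →
        max (f₀ xstar - f₀ x') 0 ≤ u₀ x' - l₀ x' ∧
          ∀ i, max (-(f i x')) 0 ≤ u i x' - l i x' :=
  lemma2_deterministic_core_general n f₀ l₀ u₀ f l u hbr₀ hbr xstar hfeas
end

section
/- Let X be a nonempty finite set, n ∈ ℕ, and let f_i, l_i, u_i : X → ℝ for i ∈ {0,1,…,n} satisfy l_i(x) ≤ f_i(x) ≤ u_i(x) for all i and all x ∈ X. Suppose the set A = { x ∈ X : l_i(x) ≥ 0 for all i ∈ {1,…,n} } is nonempty, let l* = max_{x ∈ A} l_0(x), and let f* = max{ f_0(x) : x ∈ X, f_i(x) ≥ 0 for all i ∈ {1,…,n} } (this feasible set is nonempty since it contains A). If ρ ≥ 0 satisfies u_0(x) − ρ Σ_{i=1}^n [−u_i(x)]⁺ ≤ l* for every x ∈ X, then f_0(x) − ρ Σ_{i=1}^n [−f_i(x)]⁺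 ≤ f* for every x ∈ X. -/
/-! Tightening the constraints from `lᵢ` to `fᵢ` enlarges the feasible set while `f₀ ≥ l₀`, so
`l* ≤ f*`. Loosening the data from `(f₀, fᵢ)` to `(u₀, uᵢ)` can only raise the penalty function,
since `[−a]⁺` is antitone in `a` and `ρ ≥ 0`. Hence the penalty function of `f` lies below that
of `u`, which lies below `l*` by hypothesis, hence below `f*`. -/

theorem csSup_image_le_csSup_image {α β : Type*} [ConditionallyCompleteLattice β]
    {s t : Set α} {g h : α → β} (hs : s.Nonempty) (hst : s ⊆ t) (ht : BddAbove (h '' t))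
    (hgh : ∀ x ∈ s, g x ≤ h x) : sSup (g '' s) ≤ sSup (h '' t) :=
  csSup_le (hs.image g) <| by
    rintro _ ⟨x, hx, rfl⟩
    exact (hgh x hx).trans (le_csSup ht ⟨x, hst hx, rfl⟩)

theorem sub_mul_sum_max_neg_le {ι : Type*} [Fintype ι] {ρ a b : ℝ} {g h : ι → ℝ}
    (hρ : 0 ≤ ρ) (hab : a ≤ b) (hgh : ∀ i, g i ≤ h i) :
    a - ρ * ∑ i, max (-g i) 0 ≤ b - ρ * ∑ i, max (-h i) 0 := by
  have hsum : ∑ i, max (-h i) 0 ≤ ∑ i, max (-g i) 0 :=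
    Finset.sum_le_sum fun i _ => max_le_max_right 0 (neg_le_neg (hgh i))
  linarith [mul_le_mul_of_nonneg_left hsum hρ]

theorem exact_penalty_of_quantile_condition_general {X : Type*} [Fintype X] (n : ℕ)
    (f₀ l₀ u₀ : X → ℝ) (f l u : Fin n → X → ℝ)
    (hbr₀ : ∀ x, l₀ x ≤ f₀ x ∧ f₀ x ≤ u₀ x)
    (hbr : ∀ i x, l i x ≤ f i x ∧ f i x ≤ u i x)
    (hA : ∃ x, ∀ i, 0 ≤ l i x)
    (ρ : ℝ) (hρ : 0 ≤ ρ)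
    (lstar : ℝ) (hlstar : lstar = sSup (l₀ '' {x | ∀ i, 0 ≤ l i x}))
    (fstar : ℝ) (hfstar : fstar = sSup (f₀ '' {x | ∀ i, 0 ≤ f i x}))
    (hcond : ∀ x, u₀ x - ρ * ∑ i, max (-(u i x)) 0 ≤ lstar) :
    ∀ x, f₀ x - ρ * ∑ i, max (-(f i x)) 0 ≤ fstar := by
  have hfeas : {x | ∀ i, 0 ≤ l i x} ⊆ {x | ∀ i, 0 ≤ f i x} :=
    fun x hx i => (hx i).trans (hbr i x).1
  have hlf : lstar ≤ fstar := by
    rw [hlstar, hfstar]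
    exact csSup_image_le_csSup_image hA hfeas ((Set.toFinite _).image f₀).bddAbove
      fun x _ => (hbr₀ x).1
  intro x
  calc f₀ x - ρ * ∑ i, max (-(f i x)) 0
      ≤ u₀ x - ρ * ∑ i, max (-(u i x)) 0 :=
        sub_mul_sum_max_neg_le hρ (hbr₀ x).2 fun i => (hbr i x).2
    _ ≤ lstar := hcond x
    _ ≤ fstar := hlf

/-- Deterministic core of Corollary 1 of the paper: if the objective and constraints are
bracketed by `l_i ≤ f_i ≤ u_i`, the pessimistic feasible set `A = {x : l_i(x) ≥ 0 ∀i}`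
is nonempty, `l* = max_{x ∈ A} l₀(x)`, `f* = max{f₀(x) : f_i(x) ≥ 0 ∀i}`, and
`ρ ≥ 0` satisfies `u₀(x) − ρ Σᵢ [−uᵢ(x)]⁺ ≤ l*` for all `x`, then
`f₀(x) − ρ Σᵢ [−fᵢ(x)]⁺ ≤ f*` for all `x` (exact penalty property). -/
theorem exact_penalty_of_quantile_condition {X : Type*} [Fintype X] [Nonempty X] (n : ℕ)
    (f₀ l₀ u₀ : X → ℝ) (f l u : Fin n → X → ℝ)
    (hbr₀ : ∀ x, l₀ x ≤ f₀ x ∧ f₀ x ≤ u₀ x)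
    (hbr : ∀ i x, l i x ≤ f i x ∧ f i x ≤ u i x)
    (hA : ∃ x, ∀ i, 0 ≤ l i x)
    (ρ : ℝ) (hρ : 0 ≤ ρ)
    (lstar : ℝ) (hlstar : lstar = sSup (l₀ '' {x | ∀ i, 0 ≤ l i x}))
    (fstar : ℝ) (hfstar : fstar = sSup (f₀ '' {x | ∀ i, 0 ≤ f i x}))
    (hcond : ∀ x, u₀ x - ρ * ∑ i, max (-(u i x)) 0 ≤ lstar) :
    ∀ x, f₀ x - ρ * ∑ i, max (-(f i x)) 0 ≤ fstar :=
  exact_penalty_of_quantile_condition_general n f₀ l₀ u₀ f l u hbr₀ hbr hA ρ hρ lstar hlstar fstar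
    hfstar hcond
end

section
/- Let X be a set, n ∈ ℕ, f_i : X → ℝ for i ∈ {0,1,…,n}, and let f* ∈ ℝ and ρ ≥ 0 be such that f_0(x) − ρ Σ_{i=1}^n [−f_i(x)]⁺ ≤ f* for every x ∈ X. Let T ≥ 1, let x_1,…,x_T ∈ X, and let real numbers l_{i,t−1}(x_t) for i ∈ {0,…,n} and t ∈ {1,…,T} satisfy l_{i,t−1}(x_t) ≤ f_i(x_t) for all i and t. Let t* ∈ {1,…,T} maximize t ↦ l_{0,t−1}(x_t) − ρ Σ_{i=1}^n [−l_{i,t−1}(x_t)]⁺. Then 0 ≤ f* − f_0(x_{t*}) + ρ Σ_{i=1}^n [−f_i(x_{t*})]⁺ ≤ (1/T) Σ_{t=1}^T ( f* − l_{0,t−1}(x_t) + ρ Σ_{i=1}^n [−l_{i,t−1}(x_t)]⁺ ). -/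
/-! Replacing each `fᵢ` by a lower bound can only decrease the penalized objective (as `ρ ≥ 0`),
so the regret at `x_{t*}` is at most its pessimistic estimate; by the choice of `t*` that estimate
is the smallest of the `T` estimates, hence at most their mean. Nonnegativity is the exact
penalty property at `x_{t*}`. -/

open Finset

def penalized {ι : Type*} [Fintype ι] (ρ v : ℝ) (g : ι → ℝ) : ℝ :=
  v - ρ * ∑ i, max (-g i) 0

lemma penalized_mono {ι : Type*} [Fintype ι] {ρ v v' : ℝ} {g g' : ι → ℝ} (hρ : 0 ≤ ρ)
    (hv : v ≤ v') (hg : ∀ i, g i ≤ g' i) : penalized ρ v g ≤ penalized ρ v' g' := by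
  have hsum : ∑ i, max (-g' i) 0 ≤ ∑ i, max (-g i) 0 :=
    sum_le_sum fun i _ => max_le_max (neg_le_neg (hg i)) le_rfl
  unfold penalized
  linarith [mul_le_mul_of_nonneg_left hsum hρ]

lemma le_mean_of_forall_le {T : ℕ} (t₀ : Fin T) {c : ℝ} {g : Fin T → ℝ} (h : ∀ t, c ≤ g t) :
    c ≤ (1 / (T : ℝ)) * ∑ t, g t := by
  have : Nonempty (Fin T) := ⟨t₀⟩
  have := le_expect univ_nonempty fun t (_ : t ∈ univ) => h t
  rwa [Fintype.expect_eq_sum_div_card, Fintype.card_fin, div_eq_inv_mul, ← one_div] at this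

theorem recommended_point_regret_bound_general {X : Type*} (n : ℕ)
    (f₀ : X → ℝ) (f : Fin n → X → ℝ) (fstar ρ : ℝ) (hρ : 0 ≤ ρ)
    (hexact : ∀ x, f₀ x - ρ * ∑ i, max (-(f i x)) 0 ≤ fstar)
    (T : ℕ) (x : Fin T → X)
    (l₀ : Fin T → ℝ) (l : Fin n → Fin T → ℝ)
    (hl₀ : ∀ t, l₀ t ≤ f₀ (x t)) (hl : ∀ i t, l i t ≤ f i (x t))
    (tstar : Fin T)
    (htstar : ∀ t, l₀ t - ρ * ∑ i, max (-(l i t)) 0 ≤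
      l₀ tstar - ρ * ∑ i, max (-(l i tstar)) 0) :
    0 ≤ fstar - f₀ (x tstar) + ρ * ∑ i, max (-(f i (x tstar))) 0 ∧
      fstar - f₀ (x tstar) + ρ * ∑ i, max (-(f i (x tstar))) 0 ≤
        (1 / (T : ℝ)) * ∑ t, (fstar - l₀ t + ρ * ∑ i, max (-(l i t)) 0) := by
  have hlower : l₀ tstar - ρ * ∑ i, max (-(l i tstar)) 0 ≤
      f₀ (x tstar) - ρ * ∑ i, max (-(f i (x tstar))) 0 :=
    penalized_mono hρ (hl₀ tstar) fun i => hl i tstar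
  have hmean : fstar - (l₀ tstar - ρ * ∑ i, max (-(l i tstar)) 0) ≤
      (1 / (T : ℝ)) * ∑ t, (fstar - l₀ t + ρ * ∑ i, max (-(l i t)) 0) :=
    le_mean_of_forall_le tstar fun t => by linarith [htstar t]
  exact ⟨by linarith [hexact (x tstar)], by linarith⟩

/-- Deterministic core of Theorem 4 of the paper: under the exact penalty property with
weight `ρ` and optimal value `f*`, the point `x_{t*}` recommended by maximizing the
penalized lower bound `l₀_{t−1}(x_t) − ρ Σᵢ [−lᵢ_{t−1}(x_t)]⁺` has penalty-based regret
bounded between `0` and the average pessimistic penalty-based regret. -/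
theorem recommended_point_regret_bound {X : Type*} (n : ℕ)
    (f₀ : X → ℝ) (f : Fin n → X → ℝ) (fstar ρ : ℝ) (hρ : 0 ≤ ρ)
    (hexact : ∀ x, f₀ x - ρ * ∑ i, max (-(f i x)) 0 ≤ fstar)
    (T : ℕ) (hT : 1 ≤ T) (x : Fin T → X)
    (l₀ : Fin T → ℝ) (l : Fin n → Fin T → ℝ)
    (hl₀ : ∀ t, l₀ t ≤ f₀ (x t)) (hl : ∀ i t, l i t ≤ f i (x t))
    (tstar : Fin T)
    (htstar : ∀ t, l₀ t - ρ * ∑ i, max (-(l i t)) 0 ≤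
      l₀ tstar - ρ * ∑ i, max (-(l i tstar)) 0) :
    0 ≤ fstar - f₀ (x tstar) + ρ * ∑ i, max (-(f i (x tstar))) 0 ∧
      fstar - f₀ (x tstar) + ρ * ∑ i, max (-(f i (x tstar))) 0 ≤
        (1 / (T : ℝ)) * ∑ t, (fstar - l₀ t + ρ * ∑ i, max (-(l i t)) 0) :=
  recommended_point_regret_bound_general n f₀ f fstar ρ hρ hexact T x l₀ l hl₀ hl tstar htstar
end

section
/- Let X be a nonempty finite set, n ∈ ℕ, T ≥ 1, let f_i : X → ℝ for i ∈ {0,…,n}, and for each t ∈ {0,…,T−1} let l_{i,t}, u_{i,t} : X → ℝ satisfy l_{i,t}(x) ≤ f_i(x) ≤ u_{i,t}(x) for all i, t, x. Suppose x* ∈ X satisfies f_i(x*) ≥ 0 for all i ∈ {1,…,n} and f_0(x*) ≥ f_0(x) for every x ∈ X with f_i(x) ≥ 0 for all i ∈ {1,…,n}. For each t ∈ {0,…,T−1}, let x_{t+1} maximize u_{0,t} over S_t = { x ∈ X : u_{i,t}(x) ≥ 0 for all i ∈ {1,…,n} } (each S_t is nonempty since it contains x*). Then, writing w_{i,t}(x)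 = u_{i,t}(x) − l_{i,t}(x), the following cumulative bounds hold: Σ_{t=0}^{T−1} [f_0(x*) − f_0(x_{t+1})]⁺ ≤ Σ_{t=0}^{T−1} w_{0,t}(x_{t+1}), and for each i ∈ {1,…,n}, Σ_{t=0}^{T−1} [−f_i(x_{t+1})]⁺ ≤ Σ_{t=0}^{T−1} w_{i,t}(x_{t+1}). -/
/-! Optimism does all the work. Since `x*` is feasible and `lᵢ ≤ fᵢ ≤ uᵢ`, it lies in every relaxed
feasible set `S_t`, so `f₀(x*) ≤ u₀_t(x*) ≤ u₀_t(x_{t+1})`; together with `l₀_t ≤ f₀` at `x_{t+1}`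
this bounds the instantaneous regret by the width `w₀_t(x_{t+1})`. Likewise `0 ≤ uᵢ_t(x_{t+1})`
bounds the violation `-fᵢ(x_{t+1})` by `wᵢ_t(x_{t+1})`. Summing over `t` gives both bounds. -/

theorem max_sub_zero_le_sub {α : Type*} [AddCommGroup α] [LinearOrder α] [IsOrderedAddMonoid α]
    {a b lo hi : α} (ha : a ≤ hi) (hlo : lo ≤ b) (hb : b ≤ hi) : max (a - b) 0 ≤ hi - lo :=
  max_le (sub_le_sub ha hlo) (sub_nonneg.2 (hlo.trans hb))

theorem cumulative_regret_and_violation_bounds_general {X : Type*}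
    (n T : ℕ)
    (f₀ : X → ℝ) (f : Fin n → X → ℝ)
    (l₀ u₀ : Fin T → X → ℝ) (l u : Fin n → Fin T → X → ℝ)
    (hbr₀ : ∀ t x, l₀ t x ≤ f₀ x ∧ f₀ x ≤ u₀ t x)
    (hbr : ∀ i t x, l i t x ≤ f i x ∧ f i x ≤ u i t x)
    (xstar : X) (hfeas : ∀ i, 0 ≤ f i xstar)
    (xs : Fin T → X)
    (hxs : ∀ t, (∀ i, 0 ≤ u i t (xs t)) ∧
      ∀ x, (∀ i, 0 ≤ u i t x) → u₀ t x ≤ u₀ t (xs t)) :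
    (∑ t, max (f₀ xstar - f₀ (xs t)) 0 ≤ ∑ t, (u₀ t (xs t) - l₀ t (xs t))) ∧
      ∀ i, ∑ t, max (-(f i (xs t))) 0 ≤ ∑ t, (u i t (xs t) - l i t (xs t)) := by
  have optimism : ∀ t, f₀ xstar ≤ u₀ t (xs t) := fun t =>
    (hbr₀ t xstar).2.trans <| (hxs t).2 xstar fun i => (hfeas i).trans (hbr i t xstar).2
  refine ⟨Finset.sum_le_sum fun t _ => ?_, fun i => Finset.sum_le_sum fun t _ => ?_⟩
  · exact max_sub_zero_le_sub (optimism t) (hbr₀ t (xs t)).1 (hbr₀ t (xs t)).2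
  · simpa using max_sub_zero_le_sub ((hxs t).1 i) (hbr i t (xs t)).1 (hbr i t (xs t)).2

/-- Deterministic core of Theorem 2 of the paper: if all objective and constraint
functions are bracketed by time-indexed lower and upper bounds, `x*` is a feasible
maximizer, and each `x_{t+1} = xs t` maximizes `u₀_t` over the relaxed feasible set
`S_t = {x : uᵢ_t(x) ≥ 0 ∀i}`, then the cumulative positive regret and each cumulative
constraint violation are bounded by the corresponding cumulative bound widths. -/
theorem cumulative_regret_and_violation_bounds {X : Type*} [Fintype X] [Nonempty X]
    (n T : ℕ) (hT : 1 ≤ T)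
    (f₀ : X → ℝ) (f : Fin n → X → ℝ)
    (l₀ u₀ : Fin T → X → ℝ) (l u : Fin n → Fin T → X → ℝ)
    (hbr₀ : ∀ t x, l₀ t x ≤ f₀ x ∧ f₀ x ≤ u₀ t x)
    (hbr : ∀ i t x, l i t x ≤ f i x ∧ f i x ≤ u i t x)
    (xstar : X) (hfeas : ∀ i, 0 ≤ f i xstar)
    (hopt : ∀ x, (∀ i, 0 ≤ f i x) → f₀ x ≤ f₀ xstar)
    (xs : Fin T → X)
    (hxs : ∀ t, (∀ i, 0 ≤ u i t (xs t)) ∧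
      ∀ x, (∀ i, 0 ≤ u i t x) → u₀ t x ≤ u₀ t (xs t)) :
    (∑ t, max (f₀ xstar - f₀ (xs t)) 0 ≤ ∑ t, (u₀ t (xs t) - l₀ t (xs t))) ∧
      ∀ i, ∑ t, max (-(f i (xs t))) 0 ≤ ∑ t, (u i t (xs t) - l i t (xs t)) :=
  cumulative_regret_and_violation_bounds_general n T f₀ f l₀ u₀ l u hbr₀ hbr xstar hfeas xs hxs
end

section
/- Let X be a nonempty finite set, n ∈ ℕ, T ≥ 1, let f_i : X → ℝ for i ∈ {0,…,n}, and for each t ∈ {0,…,T−1} let l_{i,t}, u_{i,t} : X → ℝ satisfy l_{i,t}(x) ≤ f_i(x) ≤ u_{i,t}(x) for all i, t, x. Suppose x* ∈ X satisfies f_i(x*) ≥ 0 for all i ∈ {1,…,n} and f_0(x*) ≥ f_0(x) for every x ∈ X with f_i(x) ≥ 0 for all i ∈ {1,…,n}. For each t ∈ {0,…,T−1}, let x_{t+1} maximize u_{0,t} over S_t = { x ∈ X : u_{i,t}(x) ≥ 0 for all i ∈ {1,…,n} }. Set B = Σ_{t=0}^{T−1} Σ_{i=0}^{n} ( u_{i,t}(x_{t+1})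 − l_{i,t}(x_{t+1}) ). Then there exists t̃ ∈ {1,…,T} such that f_0(x*) − f_0(x_{t̃}) ≤ B/T and [−f_i(x_{t̃})]⁺ ≤ B/T for every i ∈ {1,…,n}. -/
/-!
At every step `t` the maximiser `xₜ₊₁` of the upper bound over the relaxed feasible set
competes with `x*`, which lies in that set because `u ≥ f`. Hence the regret at step `t` is at
most `u₀(xₜ₊₁) - l₀(xₜ₊₁)`, and since `uᵢ(xₜ₊₁) ≥ 0` every violation `[-fᵢ(xₜ₊₁)]⁺` is at most
`uᵢ(xₜ₊₁) - lᵢ(xₜ₊₁)`. Both are bounded by the total width at step `t`, and some step has total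
width at most the average `B / T`.
-/

open Finset

theorem exists_le_sum_div_card {ι : Type*} [Fintype ι] [Nonempty ι] (w : ι → ℝ) :
    ∃ i, w i ≤ (∑ j, w j) / Fintype.card ι := by
  obtain ⟨i, -, hi⟩ := exists_le_of_expect_le univ_nonempty (Fintype.expect_eq_sum_div_card w).le
  exact ⟨i, hi⟩

theorem sub_le_sub_of_isMaxOn {X : Type*} {g l u : X → ℝ} {s : Set X} {x y : X}
    (hx : x ∈ s) (hgu : g x ≤ u x) (hlg : l y ≤ g y) (hmax : IsMaxOn u s y) :
    g x - g y ≤ u y - l y := by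
  have : u x ≤ u y := hmax hx
  linarith

theorem max_neg_zero_le_sub {a b c : ℝ} (hab : a ≤ b) (hbc : b ≤ c) (hc : 0 ≤ c) :
    max (-b) 0 ≤ c - a :=
  max_le (by linarith) (by linarith)

theorem exists_point_with_average_bounds_general {X : Type*}
    (n T : ℕ) (hT : 1 ≤ T)
    (f₀ : X → ℝ) (f : Fin n → X → ℝ)
    (l₀ u₀ : Fin T → X → ℝ) (l u : Fin n → Fin T → X → ℝ)
    (hbr₀ : ∀ t x, l₀ t x ≤ f₀ x ∧ f₀ x ≤ u₀ t x)
    (hbr : ∀ i t x, l i t x ≤ f i x ∧ f i x ≤ u i t x)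
    (xstar : X) (hfeas : ∀ i, 0 ≤ f i xstar)
    (xs : Fin T → X)
    (hxs : ∀ t, (∀ i, 0 ≤ u i t (xs t)) ∧
      ∀ x, (∀ i, 0 ≤ u i t x) → u₀ t x ≤ u₀ t (xs t))
    (B : ℝ)
    (hB : B = ∑ t, ((u₀ t (xs t) - l₀ t (xs t)) +
      ∑ i, (u i t (xs t) - l i t (xs t)))) :
    ∃ t : Fin T, f₀ xstar - f₀ (xs t) ≤ B / T ∧
      ∀ i, max (-(f i (xs t))) 0 ≤ B / T := by
  have : Nonempty (Fin T) := ⟨⟨0, hT⟩⟩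
  obtain ⟨t, ht⟩ := exists_le_sum_div_card fun t =>
    (u₀ t (xs t) - l₀ t (xs t)) + ∑ i, (u i t (xs t) - l i t (xs t))
  rw [Fintype.card_fin, ← hB] at ht
  have hwidth₀ : 0 ≤ u₀ t (xs t) - l₀ t (xs t) :=
    sub_nonneg.2 ((hbr₀ t (xs t)).1.trans (hbr₀ t (xs t)).2)
  have hwidth : ∀ i, 0 ≤ u i t (xs t) - l i t (xs t) := fun i =>
    sub_nonneg.2 ((hbr i t (xs t)).1.trans (hbr i t (xs t)).2)
  have hxstar : xstar ∈ {x | ∀ i, 0 ≤ u i t x} := fun i => (hfeas i).trans (hbr i t xstar).2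
  refine ⟨t, ?_, fun i => ?_⟩
  · calc f₀ xstar - f₀ (xs t) ≤ u₀ t (xs t) - l₀ t (xs t) :=
          sub_le_sub_of_isMaxOn hxstar (hbr₀ t xstar).2 (hbr₀ t (xs t)).1 (hxs t).2
      _ ≤ B / T := by linarith [sum_nonneg fun i (_ : i ∈ univ) => hwidth i]
  · calc max (-(f i (xs t))) 0 ≤ u i t (xs t) - l i t (xs t) :=
          max_neg_zero_le_sub (hbr i t (xs t)).1 (hbr i t (xs t)).2 ((hxs t).1 i)
      _ ≤ ∑ j, (u j t (xs t) - l j t (xs t)) :=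
          single_le_sum (fun j _ => hwidth j) (mem_univ i)
      _ ≤ B / T := by linarith

/-- Deterministic core of Theorem 3 of the paper: under the bracketing, feasibility,
optimality, and acquisition-maximization hypotheses, with
`B = Σ_t Σ_{i=0}^n (uᵢ_t(x_{t+1}) − lᵢ_t(x_{t+1}))` the total cumulative bound width,
there exists a point `x_{t̃}` in the sampled sequence whose optimality gap and every
constraint violation are simultaneously bounded by `B/T`. -/
theorem exists_point_with_average_bounds {X : Type*} [Fintype X] [Nonempty X]
    (n T : ℕ) (hT : 1 ≤ T)
    (f₀ : X → ℝ) (f : Fin n → X → ℝ)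
    (l₀ u₀ : Fin T → X → ℝ) (l u : Fin n → Fin T → X → ℝ)
    (hbr₀ : ∀ t x, l₀ t x ≤ f₀ x ∧ f₀ x ≤ u₀ t x)
    (hbr : ∀ i t x, l i t x ≤ f i x ∧ f i x ≤ u i t x)
    (xstar : X) (hfeas : ∀ i, 0 ≤ f i xstar)
    (hopt : ∀ x, (∀ i, 0 ≤ f i x) → f₀ x ≤ f₀ xstar)
    (xs : Fin T → X)
    (hxs : ∀ t, (∀ i, 0 ≤ u i t (xs t)) ∧
      ∀ x, (∀ i, 0 ≤ u i t x) → u₀ t x ≤ u₀ t (xs t))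
    (B : ℝ)
    (hB : B = ∑ t, ((u₀ t (xs t) - l₀ t (xs t)) +
      ∑ i, (u i t (xs t) - l i t (xs t)))) :
    ∃ t : Fin T, f₀ xstar - f₀ (xs t) ≤ B / T ∧
      ∀ i, max (-(f i (xs t))) 0 ≤ B / T :=
  exists_point_with_average_bounds_general n T hT f₀ f l₀ u₀ l u hbr₀ hbr xstar hfeas xs hxs B hB
end
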